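/- Let s, t be coprime integers greater than 1, σ and τ both (s,t)-cores, and n ∈ ℕ₀. Then |P_{σ,τ}(n)| = 1 if and only if σ = τ and n = |σ|. -/

import Mathlib

/-!
A partition is determined by its beta-set, and the beta-sets are exactly the subsets of `ℤ` of
charge zero. Removing a rim `d`-hook moves a bead from `b` to `b - d`, so the `d`-core of a
partition is determined by its `d`-charges (bead counts on the runners of the `d`-abacus), and
`P_{σ,τ}(n)` consists of the partitions of size `n` with the `s`-charges of `σ` and the
`t`-charges of `τ`.

Suppose `P_{σ,τ}(n) = {λ}`. Moving one bead down by `st` and another one up by `st` preserves the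
size and both charges, so `λ` is an `st`-core. If `λ` were not an `s`-core, comparing its runner
tops with those of the `s`-core `τ` (whose `t`-charges agree with those of `λ`) yields two bead
moves that preserve both charges without increasing the size; raising the result by `st`-steps
gives a second element of `P_{σ,τ}(n)`. So `λ` is an `s`-core and, symmetrically, a `t`-core,
whence `λ = σ = τ`. Conversely, an `s`-core is the only partition of its size with that `s`-core.
-/

/-- A partition, given as a weakly decreasing finitely-supported sequence of
natural numbers (`parts 0` is the first part). -/
structure SeqPartition where
  parts : ℕ →₀ ℕ
  antitone : ∀ ⦃i j : ℕ⦄, i ≤ j → parts j ≤ parts i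

namespace SeqPartition

/-- The size `|λ|` of a partition. -/
def size (l : SeqPartition) : ℕ := l.parts.sum fun _ v => v

/-- The beta-set `β(λ) = { λ_r − r : r ≥ 1 }` (here 0-indexed). -/
def betaSet (l : SeqPartition) : Set ℤ :=
  Set.range fun r : ℕ => (l.parts r : ℤ) - (r + 1)

/-- `RemoveHook h l m` : `m` is obtained from `l` by removing a rim `h`-hook;
in beta-set terms, an element `b` of `β(l)` is replaced by `b − h ∉ β(l)`. -/
def RemoveHook (h : ℕ) (l m : SeqPartition) : Prop :=
  ∃ b : ℤ, b ∈ l.betaSet ∧ b - (h : ℤ) ∉ l.betaSet ∧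
    m.betaSet = insert (b - (h : ℤ)) (l.betaSet \ {b})

/-- `l` is an `s`-core: no rim `s`-hook can be removed. -/
def IsCore (s : ℕ) (l : SeqPartition) : Prop := ∀ m : SeqPartition, ¬ RemoveHook s l m

/-- `c` is the `s`-core of `l`: it is obtained from `l` by repeatedly removing
rim `s`-hooks, and is itself an `s`-core. -/
def HasCore (s : ℕ) (l c : SeqPartition) : Prop :=
  Relation.ReflTransGen (RemoveHook s) l c ∧ IsCore s c

/-- `IsConj l m` : `m` is the conjugate partition of `l`. -/
def IsConj (l m : SeqPartition) : Prop :=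
  ∀ r : ℕ, m.parts r = Set.ncard {c : ℕ | r + 1 ≤ l.parts c}

end SeqPartition

/-- The region `U_x = { x + as + bt : a, b > 0 }`. -/
def UpSet (s t : ℕ) (x : ℤ) : Set ℤ :=
  {n : ℤ | ∃ a b : ℕ, 0 < a ∧ 0 < b ∧ n = x + (a : ℤ) * s + (b : ℤ) * t}

/-- The region `L_x = { x − as − bt : a, b ≥ 0 }`. -/
def LowSet (s t : ℕ) (x : ℤ) : Set ℤ :=
  {n : ℤ | ∃ a b : ℕ, n = x - (a : ℤ) * s - (b : ℤ) * t}

/-- `x` is a pinch-point for `l` : `L_x ⊆ β(l)` and `β(l) ∩ U_x = ∅`. -/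
def PinchPoint (s t : ℕ) (x : ℤ) (l : SeqPartition) : Prop :=
  LowSet s t x ⊆ l.betaSet ∧ l.betaSet ∩ UpSet s t x = ∅

/-- The generator `w_i` of the affine symmetric group `W_s` in its level-`t`
action on `ℤ` : `n ↦ n + t` if `n ≡ (i−1)t − (s−1)(t−1)/2 (mod s)`,
`n ↦ n − t` if `n ≡ it − (s−1)(t−1)/2 (mod s)`, and `n ↦ n` otherwise. -/
def wgen (s t : ℕ) (i : ℤ) : ℤ → ℤ := fun n =>
  if (s : ℤ) ∣ (n + ((s : ℤ) - 1) * ((t : ℤ) - 1) / 2 - (i - 1) * t) then n + t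
  else if (s : ℤ) ∣ (n + ((s : ℤ) - 1) * ((t : ℤ) - 1) / 2 - i * t) then n - t
  else n

/-- The monoid of maps `ℤ → ℤ` generated by the `wgen s t i`.  Since each
generator is an involution, this is the image of the level-`t` action
of the affine symmetric group `W_s` on `ℤ`. -/
def WMon (s t : ℕ) : Submonoid (Function.End ℤ) :=
  Submonoid.closure {f | ∃ i : ℤ, f = wgen s t i}

/-- `l` is `(s,t)`-minimal: no partition of smaller size has the same
`s`-core and `t`-core. -/
def MinimalPart (s t : ℕ) (l : SeqPartition) : Prop :=
  ∀ (m σ τ : SeqPartition), SeqPartition.HasCore s l σ → SeqPartition.HasCore t l τ →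
    SeqPartition.HasCore s m σ → SeqPartition.HasCore t m τ → l.size ≤ m.size


open Set Filter

theorem ncard_insert_sdiff_inter {α : Type*} {S T : Set α} {a b : α} (hfin : (S ∩ T).Finite)
    (ha : a ∈ S) (hb : b ∉ S) (hab : a ∈ T ↔ b ∈ T) :
    (insert b (S \ {a}) ∩ T).ncard = (S ∩ T).ncard := by
  by_cases hbT : b ∈ T
  · rw [insert_inter_of_mem hbT, sdiff_inter_right_comm,
      ncard_insert_of_notMem (fun h : b ∈ (S ∩ T) \ {a} => hb h.1.1) hfin.sdiff,
      ncard_sdiff_singleton_add_one (show a ∈ S ∩ T from ⟨ha, hab.2 hbT⟩) hfin]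
  · rw [insert_inter_of_notMem hbT, sdiff_inter_right_comm,
      sdiff_singleton_eq_self fun h => hbT (hab.1 h.2)]

theorem ncard_dvd_sub_inter_Icc {D : ℕ} (hD : 0 < D) (A M : ℤ) :
    ({x : ℤ | (D : ℤ) ∣ x - M} ∩ Icc A M).ncard = ((M - A) / D + 1).toNat := by
  have hD' : (0 : ℤ) < D := by exact_mod_cast hD
  have hset : {x : ℤ | (D : ℤ) ∣ x - M} ∩ Icc A M
      = ↑((Finset.Icc 0 ((M - A) / D)).image fun k => M - D * k) := by
    ext x
    simp only [mem_inter_iff, mem_ofPred_eq, mem_Icc, Finset.coe_image, Finset.coe_Icc,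
      mem_image, Int.le_ediv_iff_mul_le hD']
    constructor
    · rintro ⟨⟨j, hj⟩, hAx, hxM⟩
      exact ⟨-j, ⟨by nlinarith, by nlinarith⟩, by linarith⟩
    · rintro ⟨k, ⟨hk0, hkM⟩, rfl⟩
      exact ⟨⟨-k, by ring⟩, by nlinarith, by nlinarith⟩
  rw [hset, ncard_coe_finset, Finset.card_image_of_injective _ fun i j h => by
    simpa [hD.ne'] using h, Int.card_Icc, sub_zero]

theorem eventually_neg_natCast_le (z : ℤ) : ∀ᶠ K : ℕ in atTop, -(K : ℤ) ≤ z :=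
  (eventually_ge_atTop (-z).toNat).mono fun _ hK => by omega

theorem mul_dvd_sub_add_mul_iff {s t : ℕ} (ht : 0 < t) {x c : ℤ} {i : ℕ} (hi : i < s) :
    ((s * t : ℕ) : ℤ) ∣ x - (c + t * i) ↔ (t : ℤ) ∣ x - c ∧ (x - c) / t % s = i := by
  have ht' : (t : ℤ) ≠ 0 := by exact_mod_cast ht.ne'
  push_cast
  constructor
  · rintro ⟨k, hk⟩
    have hq : x - c = t * (i + s * k) := by linear_combination hk
    refine ⟨⟨_, hq⟩, ?_⟩
    rw [hq, Int.mul_ediv_cancel_left _ ht', Int.add_mul_emod_self_left,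
      Int.emod_eq_of_lt (by positivity) (by exact_mod_cast hi)]
  · rintro ⟨⟨q, hq⟩, hqi⟩
    rw [hq, Int.mul_ediv_cancel_left _ ht'] at hqi
    exact ⟨q / s, by linear_combination hq - t * Int.emod_add_mul_ediv q s + t * hqi⟩

theorem exists_le_sub_of_sum_le {n : ℕ} {u D : ℤ} {f : ℕ → ℤ} (hD : 0 < D) (hn : 0 < n)
    (hf : ∀ i, D ∣ f i - u) (h0 : u + D ≤ f 0) (hsum : ∑ i ∈ Finset.range n, f i ≤ n * u) :
    ∃ i ∈ Finset.range n, f i ≤ u - D := by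
  by_contra! hlarge
  have hnonneg : ∀ i ∈ Finset.range n, 0 ≤ f i - u := fun i hi => by
    obtain ⟨k, hk⟩ := hf i
    have := hlarge i hi
    have hk0 : 0 ≤ k := by
      by_contra hk0
      have : k ≤ -1 := by omega
      nlinarith
    rw [hk]
    exact mul_nonneg hD.le hk0
  have := Finset.single_le_sum hnonneg (Finset.mem_range.2 hn)
  rw [Finset.sum_sub_distrib, Finset.sum_const, Finset.card_range, nsmul_eq_mul] at this
  linarith

theorem strictAnti_dite_neg_succ {K : ℕ} {g : Fin K → ℤ} (hg : StrictAnti g)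
    (hgK : ∀ i, -(K : ℤ) ≤ g i) :
    StrictAnti fun r : ℕ => if h : r < K then g ⟨r, h⟩ else -((r : ℤ) + 1) := by
  refine strictAnti_nat_of_succ_lt fun n => ?_
  rcases lt_trichotomy (n + 1) K with h | h | h
  · simp only [dif_pos h, dif_pos (by omega : n < K)]
    exact hg (Fin.mk_lt_mk.2 (Nat.lt_succ_self n))
  · simp only [dif_neg (by omega : ¬ n + 1 < K), dif_pos (by omega : n < K)]
    have := hgK ⟨n, by omega⟩
    push_cast
    omega
  · simp only [dif_neg (by omega : ¬ n + 1 < K), dif_neg (by omega : ¬ n < K)]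
    push_cast
    omega

/-- Charge zero in the sense of Maya diagrams: these are exactly the beta-sets of partitions. -/
def ChargeZero (S : Set ℤ) : Prop :=
  ∀ᶠ K : ℕ in atTop, (S ∩ Ici (-(K : ℤ))).ncard = K

namespace ChargeZero

variable {S : Set ℤ}

theorem bddAbove (hS : ChargeZero S) : BddAbove S := by
  obtain ⟨K, hK, hK1⟩ := (hS.and (eventually_ge_atTop 1)).exists
  have hfin : (S ∩ Ici (-(K : ℤ))).Finite := finite_of_ncard_pos (by omega)
  refine (hfin.bddAbove.union (bddAbove_Iic (a := -(K : ℤ)))).mono fun x hx => ?_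
  rcases le_total (-(K : ℤ)) x with h | h
  · exact Or.inl ⟨hx, h⟩
  · exact Or.inr h

theorem finite_inter_Ici (hS : ChargeZero S) (A : ℤ) : (S ∩ Ici A).Finite := by
  obtain ⟨B, hB⟩ := hS.bddAbove
  exact (finite_Icc A B).subset fun x hx => ⟨hx.2, hB hx.1⟩

theorem eventually_Iio_subset (hS : ChargeZero S) : ∀ᶠ K : ℕ in atTop, Iio (-(K : ℤ)) ⊆ S := by
  obtain ⟨K₀, hK₀⟩ := eventually_atTop.1 hS
  filter_upwards [eventually_ge_atTop K₀] with K hK x hx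
  rw [mem_Iio] at hx
  by_contra hxS
  have hsplit : S ∩ Ici x = S ∩ Ici (-((-x - 1).toNat : ℤ)) := by
    ext y
    simp only [mem_inter_iff, mem_Ici]
    exact ⟨fun ⟨hy, hxy⟩ => ⟨hy, by have := hxy.lt_of_ne (by rintro rfl; exact hxS hy); omega⟩,
      fun ⟨hy, hxy⟩ => ⟨hy, by omega⟩⟩
  have h1 := hK₀ (-x).toNat (by omega)
  have h2 := hK₀ (-x - 1).toNat (by omega)
  rw [show -((-x).toNat : ℤ) = x by omega, hsplit, h2] at h1
  omega

theorem insert_sdiff (hS : ChargeZero S) {a b : ℤ} (ha : a ∈ S) (hb : b ∉ S) :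
    ChargeZero (insert b (S \ {a})) := by
  filter_upwards [hS, eventually_ge_atTop a.natAbs, eventually_ge_atTop b.natAbs]
    with K hK haK hbK
  rw [ncard_insert_sdiff_inter (hS.finite_inter_Ici _) ha hb (by simp only [mem_Ici]; omega), hK]

theorem exists_strictAnti_range_eq (hS : ChargeZero S) :
    ∃ f : ℕ → ℤ, StrictAnti f ∧ (∃ N, ∀ r, N ≤ r → f r = -(r + 1)) ∧ range f = S := by
  obtain ⟨K, hK, hlow⟩ := (hS.and hS.eventually_Iio_subset).exists
  set F := (hS.finite_inter_Ici (-(K : ℤ))).toFinset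
  have hF : F.card = K := by rw [← ncard_eq_toFinset_card _ (hS.finite_inter_Ici _), hK]
  have hFS : ∀ x ∈ F, x ∈ S ∧ -(K : ℤ) ≤ x := fun x hx => by simpa [F] using hx
  set g : Fin K → ℤ := fun i => F.orderEmbOfFin hF i.rev
  have hg : StrictAnti g := fun i j hij => (F.orderEmbOfFin hF).strictMono (Fin.rev_lt_rev.2 hij)
  have hgF : ∀ i, g i ∈ F := fun i => F.orderEmbOfFin_mem hF _
  set f : ℕ → ℤ := fun r => if h : r < K then g ⟨r, h⟩ else -(r + 1)
  have hf_lt : ∀ r (h : r < K), f r = g ⟨r, h⟩ := fun r h => dif_pos h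
  have hf_ge : ∀ r, K ≤ r → f r = -(r + 1) := fun r h => dif_neg (not_lt.2 h)
  refine ⟨f, strictAnti_dite_neg_succ hg fun i => (hFS _ (hgF i)).2, ⟨K, hf_ge⟩, ?_⟩
  ext x
  constructor
  · rintro ⟨r, rfl⟩
    rcases lt_or_ge r K with h | h
    · exact hf_lt r h ▸ (hFS _ (hgF _)).1
    · exact hf_ge r h ▸ hlow (by simp only [mem_Iio]; omega)
  · intro hx
    rcases lt_or_ge x (-(K : ℤ)) with h | h
    · exact ⟨(-x - 1).toNat, by rw [hf_ge _ (by omega)]; omega⟩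
    · have hxF : x ∈ (F : Set ℤ) := by simpa [F] using And.intro hx h
      rw [← F.range_orderEmbOfFin hF] at hxF
      obtain ⟨j, rfl⟩ := hxF
      exact ⟨j.rev, by rw [hf_lt _ j.rev.isLt]; simp only [g, Fin.eta, Fin.rev_rev]⟩

end ChargeZero

namespace SeqPartition

variable {s t d D : ℕ} {l m σ τ : SeqPartition}

def beta (l : SeqPartition) (r : ℕ) : ℤ := (l.parts r : ℤ) - (r + 1)

theorem betaSet_eq_range (l : SeqPartition) : l.betaSet = range l.beta := rfl

theorem beta_strictAnti (l : SeqPartition) : StrictAnti l.beta := fun i j hij => by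
  have := l.antitone hij.le
  simp only [beta]
  omega

theorem betaSet_injective : Function.Injective betaSet := by
  intro l m h
  have hbeta : l.beta = m.beta :=
    (l.beta_strictAnti.dual_right.range_inj m.beta_strictAnti.dual_right).1 (by
      simpa [betaSet_eq_range, range_comp] using h)
  have hparts : l.parts = m.parts := by
    ext r
    have := congrFun hbeta r
    simp only [beta] at this
    omega
  cases l
  cases m
  simp_all

theorem exists_beta_eq {f : ℕ → ℤ} (hf : StrictAnti f) {N : ℕ}
    (hN : ∀ r, N ≤ r → f r = -(r + 1)) : ∃ l : SeqPartition, l.beta = f := by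
  have hanti : Antitone fun r => f r + r :=
    antitone_nat_of_succ_le fun n => by have := hf (lt_add_one n); push_cast; omega
  have hnonneg : ∀ r, 0 ≤ f r + r + 1 := fun r => by
    rcases le_total r N with h | h
    · have : f N + N ≤ f r + r := hanti h
      have := hN N le_rfl
      omega
    · have := hN r h
      omega
  let parts : ℕ →₀ ℕ := Finsupp.onFinset (Finset.range N) (fun r => (f r + r + 1).toNat)
    fun r hr => Finset.mem_range.2 (by by_contra h; exact hr (by rw [hN r (by omega)]; simp))
  refine ⟨⟨parts, fun i j hij => Int.toNat_le_toNat ?_⟩, funext fun r => ?_⟩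
  · have : f j + j ≤ f i + i := hanti hij
    omega
  simp only [beta, parts, Finsupp.onFinset_apply, Int.toNat_of_nonneg (hnonneg r)]
  ring

theorem exists_parts_eq_zero (l : SeqPartition) : ∃ N, ∀ r, N ≤ r → l.parts r = 0 := by
  obtain ⟨N, hN⟩ := l.parts.support.exists_nat_subset_range
  exact ⟨N, fun r hr => Finsupp.notMem_support_iff.1 fun h =>
    absurd (Finset.mem_range.1 (hN h)) (not_lt.2 hr)⟩

theorem eventually_betaSet_inter_Ici (l : SeqPartition) :
    ∀ᶠ K : ℕ in atTop,
      l.betaSet ∩ Ici (-(K : ℤ)) = ↑((Finset.range K).image l.beta) := by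
  obtain ⟨N, hN⟩ := l.exists_parts_eq_zero
  filter_upwards [eventually_ge_atTop N] with K hK
  ext x
  simp only [betaSet_eq_range, mem_inter_iff, mem_range, mem_Ici, Finset.coe_image,
    Finset.coe_range, mem_image, mem_Iio]
  constructor
  · rintro ⟨⟨r, rfl⟩, hr⟩
    refine ⟨r, ?_, rfl⟩
    by_contra h
    have := hN r (hK.trans (not_lt.1 h))
    simp only [beta] at hr
    omega
  · rintro ⟨r, hr, rfl⟩
    exact ⟨⟨r, rfl⟩, by simp only [beta]; omega⟩

theorem chargeZero_betaSet (l : SeqPartition) : ChargeZero l.betaSet := by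
  filter_upwards [l.eventually_betaSet_inter_Ici] with K hK
  rw [hK, ncard_coe_finset, Finset.card_image_of_injective _ l.beta_strictAnti.injective,
    Finset.card_range]

theorem exists_betaSet_eq {S : Set ℤ} (hS : ChargeZero S) : ∃ l : SeqPartition, l.betaSet = S :=
  let ⟨_f, hf, ⟨_N, hN⟩, hrange⟩ := hS.exists_strictAnti_range_eq
  let ⟨l, hl⟩ := exists_beta_eq hf hN
  ⟨l, by rw [betaSet_eq_range, hl, hrange]⟩

theorem eventually_size_eq_sum (l : SeqPartition) :
    ∀ᶠ K : ℕ in atTop, (l.size : ℤ) =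
      ∑ x ∈ (Finset.range K).image l.beta, x + ∑ r ∈ Finset.range K, ((r : ℤ) + 1) := by
  obtain ⟨N, hN⟩ := l.exists_parts_eq_zero
  filter_upwards [eventually_ge_atTop N] with K hK
  rw [Finset.sum_image fun i _ j _ h => l.beta_strictAnti.injective h, ← Finset.sum_add_distrib,
    size, Finsupp.sum_of_support_subset (s := Finset.range K) _ (fun r hr => Finset.mem_range.2 (by
      by_contra h; exact Finsupp.mem_support_iff.1 hr (hN r (by omega)))) _ fun _ _ => rfl]
  push_cast
  simp only [beta, sub_add_cancel]

theorem finite_betaSet_inter_Ici (l : SeqPartition) (A : ℤ) : (l.betaSet ∩ Ici A).Finite :=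
  l.chargeZero_betaSet.finite_inter_Ici A

structure BeadMove (l m : SeqPartition) (a b : ℤ) : Prop where
  mem : a ∈ l.betaSet
  notMem : b ∉ l.betaSet
  betaSet_eq : m.betaSet = insert b (l.betaSet \ {a})

theorem exists_beadMove {a b : ℤ} (ha : a ∈ l.betaSet) (hb : b ∉ l.betaSet) :
    ∃ m, BeadMove l m a b :=
  let ⟨m, hm⟩ := exists_betaSet_eq (l.chargeZero_betaSet.insert_sdiff ha hb)
  ⟨m, ha, hb, hm⟩

namespace BeadMove

variable {a b : ℤ}

theorem mem_iff (h : BeadMove l m a b) {x : ℤ} :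
    x ∈ m.betaSet ↔ x = b ∨ x ∈ l.betaSet ∧ x ≠ a := by
  rw [h.betaSet_eq, mem_insert_iff, Set.mem_sdiff, mem_singleton_iff]

theorem size_eq (h : BeadMove l m a b) : (m.size : ℤ) = l.size + (b - a) := by
  obtain ⟨K, ⟨⟨⟨hl, hlK⟩, hm, hmK⟩, haK⟩, hbK⟩ := ((((l.eventually_betaSet_inter_Ici.and
    l.eventually_size_eq_sum).and (m.eventually_betaSet_inter_Ici.and m.eventually_size_eq_sum)).and
    (eventually_ge_atTop a.natAbs)).and (eventually_ge_atTop b.natAbs)).exists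
  have hb : b ∉ ((Finset.range K).image l.beta).erase a := fun hb' => by
    have : b ∈ l.betaSet ∩ Ici (-(K : ℤ)) := by
      rw [hl]
      exact Finset.mem_coe.2 (Finset.mem_of_mem_erase hb')
    exact h.notMem this.1
  have ha : a ∈ (Finset.range K).image l.beta := by
    rw [← Finset.mem_coe, ← hl]
    exact ⟨h.mem, by simp only [mem_Ici]; omega⟩
  have hfin :
      (Finset.range K).image m.beta = insert b (((Finset.range K).image l.beta).erase a) := by
    apply Finset.coe_injective
    rw [← hm, h.betaSet_eq, Finset.coe_insert, Finset.coe_erase, ← hl,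
      insert_inter_of_mem (by simp only [mem_Ici]; omega), sdiff_inter_right_comm]
  rw [hmK, hlK, hfin, Finset.sum_insert hb, Finset.sum_erase_eq_sub ha]
  ring

end BeadMove

theorem RemoveHook.beadMove (h : RemoveHook d l m) : ∃ b, BeadMove l m b (b - d) :=
  let ⟨b, hb, hnb, hm⟩ := h
  ⟨b, hb, hnb, hm⟩

theorem RemoveHook.size_eq (h : RemoveHook d l m) : (m.size : ℤ) = l.size - d := by
  obtain ⟨b, hb⟩ := h.beadMove
  rw [hb.size_eq]
  ring

theorem isCore_iff : IsCore d l ↔ ∀ b ∈ l.betaSet, b - d ∈ l.betaSet := by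
  refine ⟨fun h b hb => ?_, fun h m ⟨b, hb, hnb, _⟩ => hnb (h b hb)⟩
  by_contra hnb
  obtain ⟨m, hm⟩ := exists_beadMove hb hnb
  exact h m ⟨b, hm.mem, hm.notMem, hm.betaSet_eq⟩

theorem BeadMove.not_isCore {a : ℤ} (h : BeadMove l m a (a + d)) (hd : 0 < d) : ¬ IsCore d m :=
  fun hm => by
    have := isCore_iff.1 hm _ (h.mem_iff.2 (Or.inl rfl))
    rw [add_sub_cancel_right, h.mem_iff] at this
    omega

theorem IsCore.sub_mul_mem (h : IsCore d l) {b : ℤ} (hb : b ∈ l.betaSet) (k : ℕ) :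
    b - d * k ∈ l.betaSet := by
  induction k with
  | zero => simpa using hb
  | succ k ih =>
    have := isCore_iff.1 h _ ih
    rwa [show b - d * k - d = b - d * ↑(k + 1) by push_cast; ring] at this

theorem IsCore.mul_right (h : IsCore d l) (k : ℕ) : IsCore (d * k) l :=
  isCore_iff.2 fun b hb => by simpa using h.sub_mul_mem hb k

theorem IsCore.mem_of_le (h : IsCore d l) {b x : ℤ} (hb : b ∈ l.betaSet)
    (hdvd : (d : ℤ) ∣ b - x) (hle : x ≤ b) : x ∈ l.betaSet := by
  obtain ⟨k, hk⟩ := hdvd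
  rcases Nat.eq_zero_or_pos d with rfl | hd
  · rwa [show x = b by simpa [sub_eq_zero, eq_comm] using hk]
  · have hk0 : 0 ≤ k := by
      by_contra hk0
      have : (d : ℤ) * k < 0 := mul_neg_of_pos_of_neg (by exact_mod_cast hd) (not_le.1 hk0)
      omega
    have := h.sub_mul_mem hb k.toNat
    rwa [Int.toNat_of_nonneg hk0, show b - d * k = x by omega] at this

/-- The top bead on runner `c` of the `D`-abacus of `l`. -/
noncomputable def classMax (D : ℕ) (l : SeqPartition) (c : ℤ) : ℤ :=
  sSup (l.betaSet ∩ {x | (D : ℤ) ∣ x - c})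

theorem isGreatest_classMax (hD : 0 < D) (l : SeqPartition) (c : ℤ) :
    IsGreatest (l.betaSet ∩ {x | (D : ℤ) ∣ x - c}) (l.classMax D c) := by
  have hbdd : BddAbove (l.betaSet ∩ {x | (D : ℤ) ∣ x - c}) :=
    l.chargeZero_betaSet.bddAbove.mono inter_subset_left
  obtain ⟨K, hK⟩ := l.chargeZero_betaSet.eventually_Iio_subset.exists
  have hne : (l.betaSet ∩ {x | (D : ℤ) ∣ x - c}).Nonempty := by
    refine ⟨c - D * (|c| + K + 1), hK ?_, ⟨-(|c| + K + 1), by ring⟩⟩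
    have : (1 : ℤ) ≤ D := by exact_mod_cast hD
    simp only [mem_Iio]
    nlinarith [le_abs_self c, abs_nonneg c]
  exact ⟨Int.csSup_mem hne hbdd, fun y hy => le_csSup hbdd hy⟩

theorem classMax_mem (hD : 0 < D) (l : SeqPartition) (c : ℤ) : l.classMax D c ∈ l.betaSet :=
  (isGreatest_classMax hD l c).1.1

theorem dvd_classMax_sub (hD : 0 < D) (l : SeqPartition) (c : ℤ) :
    (D : ℤ) ∣ l.classMax D c - c :=
  (isGreatest_classMax hD l c).1.2

theorem le_classMax (hD : 0 < D) {c x : ℤ} (hx : x ∈ l.betaSet) (hxc : (D : ℤ) ∣ x - c) :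
    x ≤ l.classMax D c :=
  (isGreatest_classMax hD l c).2 ⟨hx, hxc⟩

theorem classMax_add_notMem (hD : 0 < D) (l : SeqPartition) (c : ℤ) :
    l.classMax D c + D ∉ l.betaSet := fun h => by
  have := le_classMax hD h (c := c) (by
    simpa [sub_add_eq_add_sub] using (dvd_classMax_sub hD l c).add (dvd_refl (D : ℤ)))
  omega

theorem IsCore.mem_iff_le_classMax (hD : 0 < D) (h : IsCore D l) {c x : ℤ}
    (hxc : (D : ℤ) ∣ x - c) : x ∈ l.betaSet ↔ x ≤ l.classMax D c :=
  ⟨fun hx => le_classMax hD hx hxc, fun hx => h.mem_of_le (classMax_mem hD l c)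
    (by simpa using (dvd_classMax_sub hD l c).sub hxc) hx⟩

theorem IsCore.classMax_le (hD : 0 < D) {u : ℕ} (h : IsCore u l) (c : ℤ) :
    l.classMax D c ≤ l.classMax D (c - u) + u := by
  have := le_classMax hD (isCore_iff.1 h _ (classMax_mem hD l c)) (c := c - u)
    (by simpa using dvd_classMax_sub hD l c)
  omega

theorem IsCore.add_le_classMax_sub (hD : 0 < D) (h : IsCore D l) {u x : ℤ}
    (hx : x ∈ l.betaSet) (hxu : x - u ∉ l.betaSet) :
    u + D ≤ l.classMax D x - l.classMax D (x - u) := by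
  have h1 := le_classMax hD hx (c := x) (by simp)
  have h2 : l.classMax D (x - u) < x - u :=
    not_le.1 fun hle => hxu ((h.mem_iff_le_classMax hD (c := x - u) (by simp)).2 hle)
  have h3 := Int.le_of_dvd (by omega) ((dvd_classMax_sub hD l (x - u)).neg_right)
  omega

noncomputable def classCount (l : SeqPartition) (d : ℕ) (c : ℤ) (K : ℕ) : ℕ :=
  (l.betaSet ∩ ({x | (d : ℤ) ∣ x - c} ∩ Ici (-(K : ℤ)))).ncard

/-- `l` and `m` have the same `d`-charges, i.e. (`hasCore_iff_chargeEq`) the same `d`-core. -/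
def ChargeEq (d : ℕ) (l m : SeqPartition) : Prop :=
  ∀ c : ℤ, l.classCount d c =ᶠ[atTop] m.classCount d c

namespace ChargeEq

@[refl]
theorem refl (d : ℕ) (l : SeqPartition) : ChargeEq d l l := fun _ => EventuallyEq.rfl

theorem symm (h : ChargeEq d l m) : ChargeEq d m l := fun c => (h c).symm

theorem trans {p : SeqPartition} (h : ChargeEq d l m) (h' : ChargeEq d m p) : ChargeEq d l p :=
  fun c => (h c).trans (h' c)

end ChargeEq

theorem BeadMove.chargeEq {a b : ℤ} (h : BeadMove l m a b) (hd : (d : ℤ) ∣ b - a) :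
    ChargeEq d l m := by
  intro c
  filter_upwards [eventually_ge_atTop a.natAbs, eventually_ge_atTop b.natAbs] with K haK hbK
  have hac : (d : ℤ) ∣ a - c ↔ (d : ℤ) ∣ b - c := by
    rw [show b - c = (b - a) + (a - c) by ring, dvd_add_right hd]
  refine (ncard_insert_sdiff_inter ((l.finite_betaSet_inter_Ici (-(K : ℤ))).subset
    (inter_subset_inter_right _ inter_subset_right)) h.mem h.notMem ?_).symm.trans
    (congrArg ncard (by rw [h.betaSet_eq]))
  simp only [mem_inter_iff, mem_ofPred_eq, mem_Ici, hac]
  exact and_congr_right fun _ => ⟨fun _ => by omega, fun _ => by omega⟩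

theorem ChargeEq.of_reflTransGen {e : ℕ} (hde : (e : ℤ) ∣ d)
    (h : Relation.ReflTransGen (RemoveHook d) l m) : ChargeEq e l m := by
  induction h with
  | refl => rfl
  | tail _ hstep ih =>
    obtain ⟨b, hb⟩ := hstep.beadMove
    exact ih.trans (hb.chargeEq (by simpa using hde.neg_right))

theorem eq_or_size_lt_of_reflTransGen (hd : 0 < d)
    (h : Relation.ReflTransGen (RemoveHook d) l m) : l = m ∨ m.size < l.size := by
  induction h with
  | refl => exact .inl rfl
  | tail _ hstep ih =>
    have := hstep.size_eq
    right
    rcases ih with rfl | ih <;> omega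

theorem exists_hasCore (hd : 0 < d) (l : SeqPartition) : ∃ c, HasCore d l c := by
  induction hn : l.size using Nat.strong_induction_on generalizing l with
  | _ n ih =>
    by_cases hl : IsCore d l
    · exact ⟨l, .refl, hl⟩
    · obtain ⟨m, hm⟩ := not_forall_not.1 hl
      obtain ⟨c, hc, hcore⟩ := ih m.size (by have := hm.size_eq; omega) m rfl
      exact ⟨c, .head hm hc, hcore⟩

theorem dvd_classMax_sub_classMax (hD : 0 < D) (l m : SeqPartition) (c : ℤ) :
    (D : ℤ) ∣ l.classMax D c - m.classMax D c := by
  simpa using (dvd_classMax_sub hD l c).sub (dvd_classMax_sub hD m c)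

theorem IsCore.classCount_eq (hD : 0 < D) (h : IsCore D l) (c : ℤ) (K : ℕ) :
    l.classCount D c K = ((l.classMax D c + K) / D + 1).toNat := by
  have hset : l.betaSet ∩ ({x | (D : ℤ) ∣ x - c} ∩ Ici (-(K : ℤ)))
      = {x | (D : ℤ) ∣ x - l.classMax D c} ∩ Icc (-(K : ℤ)) (l.classMax D c) := by
    ext x
    have hdvd : (D : ℤ) ∣ x - c ↔ (D : ℤ) ∣ x - l.classMax D c := by
      rw [show x - c = (x - l.classMax D c) + (l.classMax D c - c) by ring,
        dvd_add_left (dvd_classMax_sub hD l c)]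
    simp only [mem_inter_iff, mem_ofPred_eq, mem_Ici, mem_Icc]
    constructor
    · rintro ⟨hx, hxc, hK⟩
      exact ⟨hdvd.1 hxc, hK, le_classMax hD hx hxc⟩
    · rintro ⟨hxc, hK, hxM⟩
      exact ⟨(h.mem_iff_le_classMax hD (hdvd.2 hxc)).2 hxM, hdvd.2 hxc, hK⟩
  rw [classCount, hset, ncard_dvd_sub_inter_Icc hD, sub_neg_eq_add]

theorem classCount_sub_classCount_of_isCore (hD : 0 < D) (hl : IsCore D l) (hm : IsCore D m)
    {c : ℤ} {K : ℕ} (hKl : -(K : ℤ) ≤ l.classMax D c) (hKm : -(K : ℤ) ≤ m.classMax D c) :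
    (l.classCount D c K : ℤ) - m.classCount D c K = (l.classMax D c - m.classMax D c) / D := by
  have hnonneg : ∀ M : ℤ, -(K : ℤ) ≤ M → 0 ≤ (M + K) / D + 1 := fun M hM => by
    have := Int.ediv_nonneg (by omega : 0 ≤ M + K) (Int.natCast_nonneg D)
    omega
  rw [hl.classCount_eq hD, hm.classCount_eq hD, Int.toNat_of_nonneg (hnonneg _ hKl),
    Int.toNat_of_nonneg (hnonneg _ hKm),
    show m.classMax D c + K = (l.classMax D c + K) - (l.classMax D c - m.classMax D c) by ring,
    Int.sub_ediv_of_dvd _ (dvd_classMax_sub_classMax hD l m c)]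
  ring

theorem IsCore.eq_of_chargeEq (hD : 0 < D) (hl : IsCore D l) (hm : IsCore D m)
    (h : ChargeEq D l m) : l = m := by
  have hmax : ∀ c, l.classMax D c = m.classMax D c := fun c => by
    obtain ⟨K, hK, hKl, hKm⟩ :=
      ((h c).and ((eventually_neg_natCast_le (l.classMax D c)).and
        (eventually_neg_natCast_le (m.classMax D c)))).exists
    have := classCount_sub_classCount_of_isCore hD hl hm hKl hKm
    rw [hK, sub_self, eq_comm] at this
    exact sub_eq_zero.1 (Int.eq_zero_of_ediv_eq_zero (dvd_classMax_sub_classMax hD l m c) this)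
  apply betaSet_injective
  ext x
  rw [hl.mem_iff_le_classMax hD (c := x) (by simp), hm.mem_iff_le_classMax hD (c := x) (by simp),
    hmax]

theorem hasCore_iff_chargeEq (hd : 0 < d) (hσ : IsCore d σ) :
    HasCore d l σ ↔ ChargeEq d l σ := by
  refine ⟨fun h => .of_reflTransGen dvd_rfl h.1, fun h => ?_⟩
  obtain ⟨c, hc, hcore⟩ := exists_hasCore hd l
  have hcσ := hcore.eq_of_chargeEq hd hσ ((ChargeEq.of_reflTransGen dvd_rfl hc).symm.trans h)
  exact hcσ ▸ ⟨hc, hcore⟩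

theorem classCount_eq_sum (hs : 0 < s) (ht : 0 < t) (l : SeqPartition) (c : ℤ) (K : ℕ) :
    l.classCount t c K = ∑ i ∈ Finset.range s, l.classCount (s * t) (c + t * i) K := by
  have hset : l.betaSet ∩ ({x | (t : ℤ) ∣ x - c} ∩ Ici (-(K : ℤ)))
      = ⋃ i ∈ (Finset.range s : Set ℕ),
          l.betaSet ∩ ({x | ((s * t : ℕ) : ℤ) ∣ x - (c + t * i)} ∩ Ici (-(K : ℤ))) := by
    ext x
    simp only [mem_inter_iff, mem_ofPred_eq, mem_iUnion, Finset.coe_range, mem_Iio, exists_prop]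
    constructor
    · rintro ⟨hx, hxc, hK⟩
      have h0 := Int.emod_nonneg ((x - c) / t) (by exact_mod_cast hs.ne' : (s : ℤ) ≠ 0)
      have hlt := Int.emod_lt_of_pos ((x - c) / t) (by exact_mod_cast hs : (0 : ℤ) < s)
      refine ⟨((x - c) / t % s).toNat, by omega, hx,
        (mul_dvd_sub_add_mul_iff ht (by omega)).2 ⟨hxc, by omega⟩, hK⟩
    · rintro ⟨i, hi, hx, hxi, hK⟩
      exact ⟨hx, ((mul_dvd_sub_add_mul_iff ht hi).1 hxi).1, hK⟩
  simp only [classCount]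
  rw [hset, (Finset.finite_toSet _).ncard_biUnion
    (fun i _ =>
      (l.finite_betaSet_inter_Ici _).subset (inter_subset_inter_right _ inter_subset_right))
    ?_, finsum_mem_coe_finset]
  intro i hi j hj hij
  rw [Function.onFun, disjoint_left]
  rintro x ⟨-, hxi, -⟩ ⟨-, hxj, -⟩
  have := ((mul_dvd_sub_add_mul_iff ht (Finset.mem_range.1 hi)).1 hxi).2.symm.trans
    ((mul_dvd_sub_add_mul_iff ht (Finset.mem_range.1 hj)).1 hxj).2
  exact hij (by exact_mod_cast this)

theorem sum_classMax_eq (hs : 0 < s) (ht : 0 < t) (hl : IsCore (s * t) l)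
    (hm : IsCore (s * t) m) (h : ChargeEq t l m) (c : ℤ) :
    ∑ i ∈ Finset.range s, l.classMax (s * t) (c + t * i)
      = ∑ i ∈ Finset.range s, m.classMax (s * t) (c + t * i) := by
  have hD : 0 < s * t := Nat.mul_pos hs ht
  obtain ⟨K, hK, hKM⟩ := ((h c).and ((Finset.range s).eventually_all.2 fun i _ =>
    (eventually_neg_natCast_le (l.classMax (s * t) (c + t * i))).and
      (eventually_neg_natCast_le (m.classMax (s * t) (c + t * i))))).exists
  have hdiv : ∑ i ∈ Finset.range s,
      (l.classMax (s * t) (c + t * i) - m.classMax (s * t) (c + t * i)) / (s * t : ℕ) = 0 := by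
    rw [← Finset.sum_congr rfl fun i hi =>
        classCount_sub_classCount_of_isCore hD hl hm (hKM i hi).1 (hKM i hi).2,
      Finset.sum_sub_distrib, ← Nat.cast_sum, ← Nat.cast_sum, ← classCount_eq_sum hs ht,
      ← classCount_eq_sum hs ht, hK, sub_self]
  have hsum : ∑ i ∈ Finset.range s,
      (l.classMax (s * t) (c + t * i) - m.classMax (s * t) (c + t * i))
      = (s * t : ℕ) * ∑ i ∈ Finset.range s,
        (l.classMax (s * t) (c + t * i) - m.classMax (s * t) (c + t * i)) / (s * t : ℕ) := by
    rw [Finset.mul_sum]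
    exact Finset.sum_congr rfl fun i _ =>
      (Int.mul_ediv_cancel' (dvd_classMax_sub_classMax hD l m _)).symm
  rwa [hdiv, mul_zero, Finset.sum_sub_distrib, sub_eq_zero] at hsum

/-- Via `hasCore_iff_chargeEq`, this says `P_{σ,τ}(|l|) = {l}` for the `s`-core `σ` and the
`t`-core `τ` of `l`. -/
def UniqueByCharges (s t : ℕ) (l : SeqPartition) : Prop :=
  ∀ m : SeqPartition, m.size = l.size → ChargeEq s l m → ChargeEq t l m → m = l

theorem UniqueByCharges.symm (hu : UniqueByCharges s t l) : UniqueByCharges t s l :=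
  fun m hsize hs ht => hu m hsize ht hs

theorem exists_size_add_mul_not_isCore (hD : 0 < D) (m : SeqPartition) (k : ℕ) :
    ∃ m', (m'.size : ℤ) = m.size + D * (k + 1) ∧
      (∀ e : ℕ, (e : ℤ) ∣ D → ChargeEq e m m') ∧ ¬ IsCore D m' := by
  have step : ∀ p : SeqPartition, ∃ p', (p'.size : ℤ) = p.size + D ∧
      (∀ e : ℕ, (e : ℤ) ∣ D → ChargeEq e p p') ∧ ¬ IsCore D p' := fun p => by
    obtain ⟨p', hp'⟩ := exists_beadMove (classMax_mem hD p 0) (classMax_add_notMem hD p 0)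
    exact ⟨p', by rw [hp'.size_eq]; ring, fun e he => hp'.chargeEq (by simpa using he),
      hp'.not_isCore hD⟩
  induction k with
  | zero => simpa using step m
  | succ k ih =>
    obtain ⟨m₁, hsize₁, hcharge₁, -⟩ := ih
    obtain ⟨m', hsize, hcharge, hcore⟩ := step m₁
    exact ⟨m', by rw [hsize, hsize₁]; push_cast; ring,
      fun e he => (hcharge₁ e he).trans (hcharge e he), hcore⟩

/-- A smaller partition with the same charges could be raised by `st`-steps to a second partition
of size `|l|` with these charges, and that one is not an `st`-core. -/
theorem UniqueByCharges.eq_of_size_le (hu : UniqueByCharges s t l) (hD : 0 < s * t)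
    (hl : IsCore (s * t) l) (hs : ChargeEq s l m) (ht : ChargeEq t l m) (hle : m.size ≤ l.size)
    (hdvd : ((s * t : ℕ) : ℤ) ∣ l.size - m.size) : m = l := by
  rcases hle.eq_or_lt with hsize | hlt
  · exact hu m hsize hs ht
  obtain ⟨k, hk⟩ := hdvd
  have hk0 : 0 < k := by
    by_contra hk0
    have : (0 : ℤ) < (s * t : ℕ) := by exact_mod_cast hD
    have : (m.size : ℤ) < l.size := by exact_mod_cast hlt
    nlinarith
  obtain ⟨m', hsize, hcharge, hcore⟩ := exists_size_add_mul_not_isCore hD m (k.toNat - 1)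
  rw [show ((k.toNat - 1 : ℕ) : ℤ) + 1 = k by omega] at hsize
  have hm' : m' = l := hu m' (by linarith)
    (hs.trans (hcharge s (by push_cast; exact dvd_mul_right _ _)))
    (ht.trans (hcharge t (by push_cast; exact dvd_mul_left _ _)))
  exact absurd hl (hm' ▸ hcore)

/-- If `x ∈ β(l)` but `x - st ∉ β(l)`, moving the bead `x` down by `st` and the top bead of runner
`x + 1` up by `st` gives a second partition with the size and charges of `l`. -/
theorem UniqueByCharges.isCore_mul (hu : UniqueByCharges s t l) (hst : 1 < s * t) :
    IsCore (s * t) l := by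
  have hD : 0 < s * t := by omega
  rw [isCore_iff]
  intro x hx
  by_contra hxD
  obtain ⟨m₁, h₁⟩ := exists_beadMove hx hxD
  obtain ⟨m₂, h₂⟩ :=
    exists_beadMove (classMax_mem hD m₁ (x + 1)) (classMax_add_notMem hD m₁ (x + 1))
  have hcharge : ∀ e : ℕ, (e : ℤ) ∣ (s * t : ℕ) → ChargeEq e l m₂ := fun e he =>
    (h₁.chargeEq (by simpa using he.neg_right)).trans (h₂.chargeEq (by simpa using he))
  have hm₂ : m₂ = l := hu m₂ (by have := h₁.size_eq; have := h₂.size_eq; omega)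
    (hcharge s (by push_cast; exact dvd_mul_right _ _))
    (hcharge t (by push_cast; exact dvd_mul_left _ _))
  have hx₂ : x ∉ m₂.betaSet := by
    rw [h₂.mem_iff, h₁.mem_iff]
    rintro (hx' | ⟨hx' | ⟨-, hne⟩, -⟩)
    · obtain ⟨k, hk⟩ := dvd_classMax_sub hD m₁ (x + 1)
      have : ((s * t : ℕ) : ℤ) ∣ -1 := ⟨k + 1, by linear_combination hk + hx'⟩
      have : s * t ≤ 1 := by exact_mod_cast Int.le_of_dvd one_pos (dvd_neg.1 this)
      omega
    · omega
    · exact hne rfl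
  exact hx₂ (hm₂ ▸ hx)

theorem exists_double_beadMove {d e : ℕ} {a₁ a₂ b₁ b₂ : ℤ} (ha₁ : a₁ ∈ l.betaSet)
    (ha₂ : a₂ ∈ l.betaSet) (hb₁ : b₁ ∉ l.betaSet) (hb₂ : b₂ ∉ l.betaSet) (ha : a₁ ≠ a₂)
    (hb : b₁ ≠ b₂) (hd₁ : (d : ℤ) ∣ b₁ - a₁) (hd₂ : (d : ℤ) ∣ b₂ - a₂)
    (he₁ : (e : ℤ) ∣ b₂ - a₁) (he₂ : (e : ℤ) ∣ b₁ - a₂) :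
    ∃ m, ChargeEq d l m ∧ ChargeEq e l m ∧
      (m.size : ℤ) = l.size + (b₁ - a₁) + (b₂ - a₂) ∧ a₁ ∉ m.betaSet := by
  have hne : ∀ {a b : ℤ}, a ∈ l.betaSet → b ∉ l.betaSet → a ≠ b := fun ha hb h => hb (h ▸ ha)
  obtain ⟨m₁, h₁⟩ := exists_beadMove ha₁ hb₁
  obtain ⟨m, h⟩ := exists_beadMove (h₁.mem_iff.2 (.inr ⟨ha₂, ha.symm⟩))
    (by rw [h₁.mem_iff]; rintro (h | ⟨h, -⟩); exacts [hb h.symm, hb₂ h])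
  obtain ⟨m₁', h₁'⟩ := exists_beadMove ha₁ hb₂
  obtain ⟨m', h'⟩ := exists_beadMove (h₁'.mem_iff.2 (.inr ⟨ha₂, ha.symm⟩))
    (by rw [h₁'.mem_iff]; rintro (h | ⟨h, -⟩); exacts [hb h, hb₁ h])
  -- the other pairing of the two moves reaches the same partition
  have hmm' : m = m' := betaSet_injective <| by
    ext x
    rw [h.mem_iff, h₁.mem_iff, h'.mem_iff, h₁'.mem_iff]
    have : x = b₁ → x ≠ a₂ := by rintro rfl; exact (hne ha₂ hb₁).symm
    have : x = b₂ → x ≠ a₂ := by rintro rfl; exact (hne ha₂ hb₂).symm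
    tauto
  refine ⟨m, (h₁.chargeEq hd₁).trans (h.chargeEq hd₂),
    hmm' ▸ (h₁'.chargeEq he₁).trans (h'.chargeEq he₂), by linarith [h.size_eq, h₁.size_eq], ?_⟩
  rw [h.mem_iff, h₁.mem_iff]
  rintro (h | ⟨h | ⟨-, h⟩, -⟩)
  · exact hne ha₁ hb₂ h
  · exact hne ha₁ hb₁ h
  · exact h rfl

/-- Along a `t`-class the runner tops of `l` and `τ` have the same sum, and those of the `s`-core
`τ` drop by at most `s` from runner `c` to runner `c - s`; so a drop of at least `s + st` at
`x` is compensated by a rise at some `x + ti`. -/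
theorem exists_classMax_sub_le (hs : 0 < s) (ht : 0 < t) (hl : IsCore (s * t) l)
    (hτ : IsCore s τ) (h : ChargeEq t l τ) {x : ℤ}
    (hgap : (s : ℤ) + (s * t : ℕ) ≤ l.classMax (s * t) x - l.classMax (s * t) (x - s)) :
    ∃ i : ℕ, l.classMax (s * t) (x + t * i) - l.classMax (s * t) (x - s + t * i)
      ≤ s - (s * t : ℕ) := by
  have hD : 0 < s * t := Nat.mul_pos hs ht
  have hrow : ∑ i ∈ Finset.range s,
      (l.classMax (s * t) (x + t * i) - l.classMax (s * t) (x - s + t * i)) ≤ s * s := by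
    rw [Finset.sum_sub_distrib, sum_classMax_eq hs ht hl (hτ.mul_right t) h,
      sum_classMax_eq hs ht hl (hτ.mul_right t) h, ← Finset.sum_sub_distrib]
    calc _ ≤ ∑ _i ∈ Finset.range s, (s : ℤ) := Finset.sum_le_sum fun i _ => by
          have := hτ.classMax_le hD (x + t * i)
          rw [sub_add_eq_add_sub]
          linarith
      _ = s * s := by simp
  obtain ⟨i, -, hi⟩ := exists_le_sub_of_sum_le
    (f := fun i : ℕ => l.classMax (s * t) (x + t * i) - l.classMax (s * t) (x - s + t * i))
    (u := s) (D := (s * t : ℕ)) (by exact_mod_cast hD) hs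
    (fun i => by
      obtain ⟨a, ha⟩ := dvd_classMax_sub hD l (x + t * i)
      obtain ⟨b, hb⟩ := dvd_classMax_sub hD l (x - s + t * i)
      exact ⟨a - b, by linear_combination ha - hb⟩)
    (by simpa using hgap) hrow
  exact ⟨i, hi⟩

/-- If `x ∈ β(l)` but `x - s ∉ β(l)`, move the top bead of runner `x` to the slot above the top of
runner `x - s`, and the top bead of runner `x - s + ti` to the slot above the top of runner
`x + ti`: this keeps the `s`-charges, keeps the `t`-charges (pair the moves the other way round),
and does not increase the size. -/
theorem UniqueByCharges.isCore_of_chargeEq (hu : UniqueByCharges s t l) (hs : 0 < s) (ht : 0 < t)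
    (hts : ¬ (t : ℤ) ∣ s) (hl : IsCore (s * t) l) (hτ : IsCore s τ) (h : ChargeEq t l τ) :
    IsCore s l := by
  have hD : 0 < s * t := Nat.mul_pos hs ht
  rw [isCore_iff]
  intro x hx
  by_contra hxs
  have hgap := hl.add_le_classMax_sub hD hx hxs
  obtain ⟨i, hi⟩ := exists_classMax_sub_le hs ht hl hτ h hgap
  obtain ⟨u₁, hu₁⟩ := dvd_classMax_sub hD l x
  obtain ⟨u₂, hu₂⟩ := dvd_classMax_sub hD l (x - s)
  obtain ⟨u₃, hu₃⟩ := dvd_classMax_sub hD l (x - s + t * i)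
  obtain ⟨u₄, hu₄⟩ := dvd_classMax_sub hD l (x + t * i)
  push_cast at hu₁ hu₂ hu₃ hu₄
  obtain ⟨m, hms, hmt, hsize, ha₁⟩ := exists_double_beadMove (d := s) (e := t)
    (classMax_mem hD l x) (classMax_mem hD l (x - s + t * i))
    (classMax_add_notMem hD l (x - s)) (classMax_add_notMem hD l (x + t * i))
    (fun heq => hts ⟨i + s * u₃ - s * u₁, by linear_combination hu₃ - hu₁ + heq⟩)
    (fun heq => hts ⟨s * u₂ - i - s * u₄, by linear_combination hu₂ - hu₄ - heq⟩)
    ⟨t * u₂ + t - t * u₁ - 1, by push_cast; linear_combination hu₂ - hu₁⟩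
    ⟨1 + t * u₄ - t * u₃ + t, by push_cast; linear_combination hu₄ - hu₃⟩
    ⟨i + s * u₄ - s * u₁ + s, by push_cast; linear_combination hu₄ - hu₁⟩
    ⟨s * u₂ + s - i - s * u₃, by push_cast; linear_combination hu₂ - hu₃⟩
  have hml : m = l := hu.eq_of_size_le hD hl hms hmt
    (by have : (m.size : ℤ) ≤ l.size := by linarith
        exact_mod_cast this)
    ⟨u₁ - u₂ + u₃ - u₄ - 2, by
      push_cast at hsize ⊢
      linear_combination -hsize - hu₂ + hu₁ - hu₄ + hu₃⟩
  exact ha₁ (hml ▸ classMax_mem hD l x)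

theorem UniqueByCharges.eq_and_eq (hs : 1 < s) (ht : 1 < t) (hst : Nat.Coprime s t)
    (hσs : IsCore s σ) (hσt : IsCore t σ) (hτs : IsCore s τ) (hτt : IsCore t τ)
    (hu : UniqueByCharges s t l) (hσ : ChargeEq s l σ) (hτ : ChargeEq t l τ) : l = σ ∧ l = τ := by
  have hlst : IsCore (s * t) l := hu.isCore_mul (by nlinarith)
  have hls : IsCore s l := hu.isCore_of_chargeEq (by omega) (by omega)
    (fun h => by have := hst.symm.eq_one_of_dvd (Int.natCast_dvd_natCast.1 h); omega)
    hlst hτs hτ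
  have hlt : IsCore t l := hu.symm.isCore_of_chargeEq (by omega) (by omega)
    (fun h => by have := hst.eq_one_of_dvd (Int.natCast_dvd_natCast.1 h); omega)
    (mul_comm s t ▸ hlst) hσt hσ
  exact ⟨hls.eq_of_chargeEq (by omega) hσs hσ, hlt.eq_of_chargeEq (by omega) hτt hτ⟩

end SeqPartition

open SeqPartition in
/-- for `(s,t)`-cores `σ, τ`, `|P_{σ,τ}(n)| = 1` iff `σ = τ` and
`n = |σ|`. -/
theorem stmt15 (s t : ℕ) (hs : 1 < s) (ht : 1 < t) (hst : Nat.Coprime s t)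
    (σ τ : SeqPartition)
    (hσs : SeqPartition.IsCore s σ) (hσt : SeqPartition.IsCore t σ)
    (hτs : SeqPartition.IsCore s τ) (hτt : SeqPartition.IsCore t τ)
    (n : ℕ) :
    {l : SeqPartition | l.size = n ∧ SeqPartition.HasCore s l σ ∧
      SeqPartition.HasCore t l τ}.ncard = 1 ↔ (σ = τ ∧ n = σ.size) := by
  have hs0 : 0 < s := by omega
  have ht0 : 0 < t := by omega
  constructor
  · intro hone
    obtain ⟨l, hl⟩ := ncard_eq_one.1 hone
    have hmem : ∀ m, (m.size = n ∧ HasCore s m σ ∧ HasCore t m τ) ↔ m = l :=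
      fun m => Set.ext_iff.1 hl m
    obtain ⟨rfl, hlσ, hlτ⟩ := (hmem l).2 rfl
    have hσ := (hasCore_iff_chargeEq hs0 hσs).1 hlσ
    have hτ := (hasCore_iff_chargeEq ht0 hτt).1 hlτ
    obtain ⟨rfl, rfl⟩ := UniqueByCharges.eq_and_eq hs ht hst hσs hσt hτs hτt
      (fun m hsize hms hmt => (hmem m).1 ⟨hsize,
        (hasCore_iff_chargeEq hs0 hσs).2 (hms.symm.trans hσ),
        (hasCore_iff_chargeEq ht0 hτt).2 (hmt.symm.trans hτ)⟩) hσ hτ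
    exact ⟨rfl, rfl⟩
  · rintro ⟨rfl, rfl⟩
    refine ncard_eq_one.2 ⟨σ, Set.ext fun l => ⟨fun ⟨hsize, hlσ, _⟩ => ?_, ?_⟩⟩
    · exact (eq_or_size_lt_of_reflTransGen hs0 hlσ.1).resolve_right (by omega)
    · rintro rfl
      exact ⟨rfl, ⟨.refl, hσs⟩, ⟨.refl, hσt⟩⟩
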